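/- Define χ_n(t) = t^{n+1}(t³ − t − 1) + t³ + t² − 1 and let λ_n denote its largest real root, assumed > 1 for n ≥ 7. Then the sequence λ_n is strictly increasing in n for n ≥ 7, i.e., λ_{n+1} > λ_n. -/

import Mathlib

/-!
Since `χ_{n+1}(t) = t·χ_n(t) + (1 - t)(t³ + t² - 1)`, the polynomial `χ_{n+1}` is negative at
the root `λ_n > 1` of `χ_n`; it is positive wherever `t³ - t - 1 > 0`, e.g. at `λ_n + 1`.
By the intermediate value theorem `χ_{n+1}` has a root beyond `λ_n`, so its largest root
`λ_{n+1}` exceeds `λ_n`.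
-/

/-- The characteristic polynomial `χ_n(t) = t^{n+1}(t³−t−1) + t³+t²−1`. -/
noncomputable def chi (n : ℕ) (t : ℝ) : ℝ :=
  t ^ (n + 1) * (t ^ 3 - t - 1) + t ^ 3 + t ^ 2 - 1

theorem continuous_chi (n : ℕ) : Continuous (chi n) := by
  unfold chi; fun_prop

theorem chi_succ (n : ℕ) (t : ℝ) :
    chi (n + 1) t = t * chi n t + (1 - t) * (t ^ 3 + t ^ 2 - 1) := by
  unfold chi; ring

theorem chi_succ_neg_of_chi_eq_zero {n : ℕ} {t : ℝ} (ht : 1 < t) (hroot : chi n t = 0) :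
    chi (n + 1) t < 0 := by
  rw [chi_succ, hroot, mul_zero, zero_add]
  exact mul_neg_of_neg_of_pos (by linarith) (by nlinarith)

theorem chi_pos {t : ℝ} (ht : 0 ≤ t) (hcubic : 0 < t ^ 3 - t - 1) (n : ℕ) : 0 < chi n t := by
  unfold chi
  have := mul_nonneg (pow_nonneg ht (n + 1)) hcubic.le
  nlinarith

theorem exists_chi_succ_eq_zero_gt {n : ℕ} {a : ℝ} (ha : 1 < a) (hroot : chi n a = 0) :
    ∃ c, a < c ∧ chi (n + 1) c = 0 := by
  have hneg := chi_succ_neg_of_chi_eq_zero ha hroot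
  have hpos : 0 < chi (n + 1) (a + 1) := chi_pos (by linarith)
    (by nlinarith [mul_pos (zero_lt_one.trans ha) (zero_lt_one.trans ha)]) (n + 1)
  obtain ⟨c, hc, hcz⟩ := intermediate_value_Icc (by linarith : a ≤ a + 1)
    (continuous_chi (n + 1)).continuousOn ⟨hneg.le, hpos.le⟩
  refine ⟨c, lt_of_le_of_ne hc.1 ?_, hcz⟩
  rintro rfl
  exact hneg.ne hcz

theorem chi_largest_root_increasing_general (n : ℕ) (a b : ℝ)
    (ha1 : 1 < a) (haroot : chi n a = 0)
    (hbmax : ∀ t : ℝ, chi (n + 1) t = 0 → t ≤ b) :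
    a < b := by
  obtain ⟨c, hac, hc⟩ := exists_chi_succ_eq_zero_gt ha1 haroot
  exact hac.trans_le (hbmax c hc)

/-- The largest real roots `λ_n` of `χ_n` (assumed `> 1` for `n ≥ 7`) are strictly
increasing in `n`: `λ_{n+1} > λ_n`. -/
theorem chi_largest_root_increasing (n : ℕ) (hn : 7 ≤ n) (a b : ℝ)
    (ha1 : 1 < a) (haroot : chi n a = 0) (hamax : ∀ t : ℝ, chi n t = 0 → t ≤ a)
    (hb1 : 1 < b) (hbroot : chi (n + 1) b = 0)
    (hbmax : ∀ t : ℝ, chi (n + 1) t = 0 → t ≤ b) :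
    a < b :=
  chi_largest_root_increasing_general n a b ha1 haroot hbmax
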